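/- Let M be a metric space and μ a finite nonzero Borel measure on M. Suppose there exist real numbers R > s > 0 and a positive integer N such that μ(B(p,R)) ≥ 2N · μ(closedBall(p,s)) for every p ∈ M (open ball on the left, closed ball on the right). Then for any collection of at most N points p₁,…,p_t in M and radii r₁,…,r_t each at most s, the support of μ is not contained in the union of the closed balls closedBall(pᵢ, rᵢ). -/

import Mathlib

open MeasureTheory Metric ENNReal

/-- The support of a Borel measure: points all of whose neighborhoods have
positive measure. -/
def measureSupport {M : Type*} [TopologicalSpace M] [MeasurableSpace M]
    (μ : Measure M) : Set M :=
  {x | ∀ U ∈ nhds x, 0 < μ U}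

/-! The support is conull, so the balls cover almost all of `M` and the largest of them carries
at least a `1/N` share of the mass, while the doubling bound leaves it at most a `1/(2N)` share.
For a finite measure this forces the mass to vanish. -/

theorem measureSupport_eq_support {M : Type*} [TopologicalSpace M] [MeasurableSpace M]
    (μ : Measure M) : measureSupport μ = μ.support :=
  Set.ext fun x => (Measure.mem_support_iff_forall x).symm

theorem ENNReal.eq_zero_of_two_mul_le {a : ℝ≥0∞} (ha : a ≠ ∞) (h : 2 * a ≤ a) : a = 0 :=
  nonpos_iff_eq_zero.mp <| ENNReal.le_of_add_le_add_left ha <| by rwa [add_zero, ← two_mul]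

theorem measure_univ_le_card_mul_of_ae_cover {α ι : Type*} [MeasurableSpace α] {μ : Measure α}
    [Fintype ι] {A : ι → Set α} (hcover : ⋃ i, A i ∈ ae μ) {j : ι}
    (hj : ∀ i, μ (A i) ≤ μ (A j)) : μ Set.univ ≤ Fintype.card ι * μ (A j) :=
  calc μ Set.univ = μ (⋃ i, A i) := (measure_congr (ae_eq_univ.mpr hcover)).symm
    _ ≤ ∑ i, μ (A i) := measure_iUnion_fintype_le μ A
    _ ≤ ∑ _i : ι, μ (A j) := Finset.sum_le_sum fun i _ => hj i
    _ = Fintype.card ι * μ (A j) := by simp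

theorem measure_univ_eq_zero_of_ae_cover_of_two_mul_le {α ι : Type*} [MeasurableSpace α]
    {μ : Measure α} [IsFiniteMeasure μ] [Fintype ι] {N : ℕ} (hι : Fintype.card ι ≤ N)
    {A : ι → Set α} (hcover : ⋃ i, A i ∈ ae μ)
    (hsmall : ∀ i, 2 * (N : ℝ≥0∞) * μ (A i) ≤ μ Set.univ) : μ Set.univ = 0 := by
  cases isEmpty_or_nonempty ι
  · have : μ = 0 := ae_eq_bot.mp (Filter.empty_mem_iff_bot.mp (by simpa using hcover))
    simp [this]
  obtain ⟨j, hj⟩ := Finite.exists_max fun i => μ (A i)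
  have hlarge : μ Set.univ ≤ N * μ (A j) :=
    (measure_univ_le_card_mul_of_ae_cover hcover hj).trans (by gcongr)
  have hzero : (N : ℝ≥0∞) * μ (A j) = 0 :=
    ENNReal.eq_zero_of_two_mul_le (mul_ne_top (natCast_ne_top N) (measure_ne_top μ _))
      (by simpa only [mul_assoc] using (hsmall j).trans hlarge)
  exact nonpos_iff_eq_zero.mp (hzero ▸ hlarge)

theorem support_not_covered_by_few_small_balls_general
    {M : Type*} [MetricSpace M] [MeasurableSpace M]
    [SecondCountableTopology M]
    (μ : Measure M) [IsFiniteMeasure μ] (hμ : 0 < μ Set.univ)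
    (R s : ℝ) (N : ℕ)
    (hdoub : ∀ p : M, 2 * (N : ℝ≥0∞) * μ (closedBall p s) ≤ μ (ball p R))
    (t : ℕ) (ht : t ≤ N) (p : Fin t → M) (r : Fin t → ℝ) (hr : ∀ i, r i ≤ s) :
    ¬ (measureSupport μ ⊆ ⋃ i, closedBall (p i) (r i)) := by
  intro hcov
  have hcover : ⋃ i, closedBall (p i) (r i) ∈ ae μ :=
    Filter.mem_of_superset Measure.support_mem_ae (measureSupport_eq_support μ ▸ hcov)
  have hsmall (i : Fin t) : 2 * (N : ℝ≥0∞) * μ (closedBall (p i) (r i)) ≤ μ Set.univ :=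
    calc 2 * (N : ℝ≥0∞) * μ (closedBall (p i) (r i))
        ≤ 2 * N * μ (closedBall (p i) s) := by gcongr; exact hr i
      _ ≤ μ (ball (p i) R) := hdoub (p i)
      _ ≤ μ Set.univ := measure_mono (Set.subset_univ _)
  exact hμ.ne' (measure_univ_eq_zero_of_ae_cover_of_two_mul_le (by simpa using ht) hcover
    hsmall)

/-- If a finite nonzero Borel measure on a (second countable) metric space satisfies the
doubling-type bound `μ(B(p,R)) ≥ 2N · μ(closedBall(p,s))`, then its support cannot be
covered by at most `N` closed balls of radii at most `s`. -/
theorem support_not_covered_by_few_small_balls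
    {M : Type*} [MetricSpace M] [MeasurableSpace M] [BorelSpace M]
    [SecondCountableTopology M]
    (μ : Measure M) [IsFiniteMeasure μ] (hμ : 0 < μ Set.univ)
    (R s : ℝ) (N : ℕ) (hsR : s < R) (hs : 0 < s) (hN : 0 < N)
    (hdoub : ∀ p : M, 2 * (N : ℝ≥0∞) * μ (closedBall p s) ≤ μ (ball p R))
    (t : ℕ) (ht : t ≤ N) (p : Fin t → M) (r : Fin t → ℝ) (hr : ∀ i, r i ≤ s) :
    ¬ (measureSupport μ ⊆ ⋃ i, closedBall (p i) (r i)) :=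
  support_not_covered_by_few_small_balls_general μ hμ R s N hdoub t ht p r hr
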